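/- Let p, m, q ∈ ℝ and let D be the connection on U = {(x¹,x²) ∈ ℝ² : x¹ > 0} whose only possibly nonzero Christoffel symbols are Γ¹_{11} = p/x¹, Γ²_{11} = m/x¹ and Γ²_{12} = Γ²_{21} = q/x¹ (a Type B connection of class (i)). Then (U, D) admits an affine gradient Ricci soliton: the function h(x¹,x²) = (2q(1 + p − q)/(1 + p)) ln x¹ if p ≠ −1, and h(x¹,x²) = q² (ln x¹)² if p = −1, satisfies Hes_h(∂_i,∂_j) + 2ρ^{sym}_{ij} = 0 on U for all i,j ∈ {1,2}. -/

import Mathlib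

noncomputable section

/-- Points of the affine surface (local coordinates `(x¹,x²)`). -/
abbrev Pt2 := Fin 2 → ℝ

/-- Partial derivative `∂_{x^i}`. -/
def pd2 (i : Fin 2) (f : Pt2 → ℝ) (p : Pt2) : ℝ :=
  fderiv ℝ f p (Pi.single i 1)

/-- The Ricci tensor `ρ_{ij}` of the affine connection with Christoffel symbols `Γ^k_{ij}`:
`ρ_{ij} = Σ_k ∂_{x^k}Γ^k_{ij} − ∂_{x^i}(Σ_k Γ^k_{kj}) + Σ_{k,l}(Γ^k_{kl}Γ^l_{ij} − Γ^k_{il}Γ^l_{kj})`. -/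
def ricciD (Γ : Fin 2 → Fin 2 → Fin 2 → Pt2 → ℝ) (i j : Fin 2) (p : Pt2) : ℝ :=
  (∑ k : Fin 2, pd2 k (Γ k i j) p) - pd2 i (fun q => ∑ k : Fin 2, Γ k k j q) p
    + ∑ k : Fin 2, ∑ l : Fin 2, (Γ k k l p * Γ l i j p - Γ k i l p * Γ l k j p)

/-- The symmetric part `ρ^{sym}_{ij} = ½(ρ_{ij}+ρ_{ji})` of the Ricci tensor. -/
def ricciDSym (Γ : Fin 2 → Fin 2 → Fin 2 → Pt2 → ℝ) (i j : Fin 2) (p : Pt2) : ℝ :=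
  (ricciD Γ i j p + ricciD Γ j i p) / 2

/-- The affine Hessian `Hes_h(∂_i,∂_j) = ∂_i∂_j h − Σ_k Γ^k_{ij} ∂_k h`. -/
def hessD (Γ : Fin 2 → Fin 2 → Fin 2 → Pt2 → ℝ) (h : Pt2 → ℝ) (i j : Fin 2) (p : Pt2) : ℝ :=
  pd2 i (pd2 j h) p - ∑ k : Fin 2, Γ k i j p * pd2 k h p

/-- The covariant derivative of the Ricci tensor:
`(D_{∂_i}ρ)_{jk} = ∂_i ρ_{jk} − Σ_l Γ^l_{ij} ρ_{lk} − Σ_l Γ^l_{ik} ρ_{jl}`. -/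
def covRicciD (Γ : Fin 2 → Fin 2 → Fin 2 → Pt2 → ℝ) (i j k : Fin 2) (p : Pt2) : ℝ :=
  pd2 i (fun q => ricciD Γ j k q) p - (∑ l : Fin 2, Γ l i j p * ricciD Γ l k p)
    - ∑ l : Fin 2, Γ l i k p * ricciD Γ j l p

/-- The Type B class (i) connection with `Γ¹_{11} = p/x¹`, `Γ²_{11} = m/x¹`,
`Γ²_{12} = Γ²_{21} = q/x¹` and all other Christoffel symbols zero. -/
def ΓB1 (P m q : ℝ) : Fin 2 → Fin 2 → Fin 2 → Pt2 → ℝ := fun k i j x =>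
  if k = 0 ∧ i = 0 ∧ j = 0 then P / x 0
  else if k = 1 ∧ i = 0 ∧ j = 0 then m / x 0
  else if k = 1 ∧ ((i = 0 ∧ j = 1) ∨ (i = 1 ∧ j = 0)) then q / x 0
  else 0

/-! Every Christoffel symbol of `ΓB1` has the form `c / x¹` with a constant `c` (a Type B
connection), so for `h = f(x¹)` all terms of the soliton equation are functions of `x¹` alone:
the only nontrivial component is the `(1,1)` one, which becomes the Euler-type ODE
`f'' − (p/t) f' + 2q(1+p−q)/t² = 0`. Its solutions include `C ln t` with `C(1+p) = 2q(1+p−q)`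
and, when `p = −1` (where the indicial root is double), `q² (ln t)²`. -/

open Filter Topology

lemma pd2_comp_apply_zero {g : ℝ → ℝ} {g' : ℝ} {x : Pt2} (hg : HasDerivAt g g' (x 0))
    (i : Fin 2) : pd2 i (fun y => g (y 0)) x = if i = 0 then g' else 0 := by
  have hfd : HasFDerivAt (fun y : Pt2 => g (y 0))
      (g' • ContinuousLinearMap.proj (R := ℝ) (φ := fun _ : Fin 2 => ℝ) 0) x :=
    hg.comp_hasFDerivAt (f := fun y : Pt2 => y 0) x (hasFDerivAt_apply 0 x)
  rw [pd2, hfd.fderiv]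
  fin_cases i <;> simp

lemma pd2_pd2_comp_apply_zero {g g' : ℝ → ℝ} {g'' : ℝ} {x : Pt2}
    (hg : ∀ᶠ t in 𝓝 (x 0), HasDerivAt g (g' t) t) (hg' : HasDerivAt g' g'' (x 0)) (i j : Fin 2) :
    pd2 i (pd2 j fun y => g (y 0)) x = if i = 0 ∧ j = 0 then g'' else 0 := by
  have hfirst : pd2 j (fun y => g (y 0)) =ᶠ[𝓝 x] fun y => if j = 0 then g' (y 0) else 0 := by
    filter_upwards [((continuous_apply 0).tendsto x).eventually hg] with y hy
    exact pd2_comp_apply_zero hy j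
  rw [pd2, hfirst.fderiv_eq, ← pd2]
  fin_cases j
  · simpa using pd2_comp_apply_zero hg' i
  · simpa using pd2_comp_apply_zero (hasDerivAt_const (x 0) (0 : ℝ)) i

/-- Opozda's Type B connections. -/
def typeB (c : Fin 2 → Fin 2 → Fin 2 → ℝ) : Fin 2 → Fin 2 → Fin 2 → Pt2 → ℝ :=
  fun k i j x => c k i j / x 0

def typeBRicci (c : Fin 2 → Fin 2 → Fin 2 → ℝ) (i j : Fin 2) : ℝ :=
  -c 0 i j + (if i = 0 then ∑ k, c k k j else 0)
    + ∑ k, ∑ l, (c k k l * c l i j - c k i l * c l k j)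

lemma pd2_div_apply_zero (a : ℝ) {x : Pt2} (hx : x 0 ≠ 0) (i : Fin 2) :
    pd2 i (fun y => a / y 0) x = if i = 0 then -a / x 0 ^ 2 else 0 := by
  have hd : HasDerivAt (fun t => a / t) (-a / x 0 ^ 2) (x 0) := by
    simpa [div_eq_mul_inv, neg_div] using (hasDerivAt_inv hx).const_mul a
  exact pd2_comp_apply_zero hd i

lemma ricciD_typeB (c : Fin 2 → Fin 2 → Fin 2 → ℝ) {x : Pt2} (hx : x 0 ≠ 0) (i j : Fin 2) :
    ricciD (typeB c) i j x = typeBRicci c i j / x 0 ^ 2 := by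
  have htrace : (fun y : Pt2 => ∑ k, typeB c k k j y) = fun y => (∑ k, c k k j) / y 0 := by
    funext y
    simp only [typeB, Finset.sum_div]
  rw [ricciD, htrace, pd2_div_apply_zero _ hx]
  unfold typeB
  simp only [Fin.isValue, pd2_div_apply_zero _ hx, Finset.sum_ite_eq', Finset.mem_univ,
    ↓reduceIte, Fin.sum_univ_two, neg_add_rev, Finset.sum_sub_distrib, typeBRicci]
  split_ifs <;> field_simp <;> ring

lemma hessD_typeB_comp_apply_zero (c : Fin 2 → Fin 2 → Fin 2 → ℝ) {f f' : ℝ → ℝ} {f'' : ℝ}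
    {x : Pt2} (hf : ∀ᶠ t in 𝓝 (x 0), HasDerivAt f (f' t) t) (hf' : HasDerivAt f' f'' (x 0))
    (i j : Fin 2) :
    hessD (typeB c) (fun y => f (y 0)) i j x
      = (if i = 0 ∧ j = 0 then f'' else 0) - c 0 i j / x 0 * f' (x 0) := by
  rw [hessD, pd2_pd2_comp_apply_zero hf hf', Fin.sum_univ_two,
    pd2_comp_apply_zero hf.self_of_nhds, pd2_comp_apply_zero hf.self_of_nhds]
  simp [typeB]

lemma ΓB1_eq_typeB (P m q : ℝ) : ΓB1 P m q = typeB fun k i j => ΓB1 P m q k i j 1 := by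
  funext k i j x
  simp only [ΓB1, typeB, Pi.one_apply, div_one]
  split_ifs <;> simp

lemma typeBRicci_ΓB1 (P m q : ℝ) (i j : Fin 2) :
    typeBRicci (fun k i j => ΓB1 P m q k i j 1) i j
      = if i = 0 ∧ j = 0 then q * (1 + P - q) else 0 := by
  fin_cases i <;> fin_cases j <;> simp [typeBRicci, ΓB1, Fin.sum_univ_two]; ring

theorem ΓB1_soliton_of_ode {P m q : ℝ} {f f' f'' : ℝ → ℝ}
    (hf : ∀ t, 0 < t → HasDerivAt f (f' t) t) (hf' : ∀ t, 0 < t → HasDerivAt f' (f'' t) t)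
    (hode : ∀ t, 0 < t → f'' t - P / t * f' t + 2 * q * (1 + P - q) / t ^ 2 = 0) :
    ∀ x : Pt2, 0 < x 0 → ∀ i j : Fin 2,
      hessD (ΓB1 P m q) (fun y => f (y 0)) i j x + 2 * ricciDSym (ΓB1 P m q) i j x = 0 := by
  intro x hx i j
  have hfx : ∀ᶠ t in 𝓝 (x 0), HasDerivAt f (f' t) t := (eventually_gt_nhds hx).mono hf
  rw [ricciDSym, ΓB1_eq_typeB, hessD_typeB_comp_apply_zero _ hfx (hf' _ hx),
    ricciD_typeB _ hx.ne', ricciD_typeB _ hx.ne', typeBRicci_ΓB1, typeBRicci_ΓB1]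
  fin_cases i <;> fin_cases j
  · simp only [Fin.zero_eta, Fin.isValue, and_self, ↓reduceIte, ΓB1, Pi.one_apply, div_one,
      add_self_div_two]
    linear_combination hode _ hx
  all_goals simp [ΓB1]

lemma hasDerivAt_const_mul_log_sq (C : ℝ) {t : ℝ} (ht : 0 < t) :
    HasDerivAt (fun s => C * Real.log s ^ 2) (2 * C * Real.log t / t) t :=
  (((Real.hasDerivAt_log ht.ne').pow 2).const_mul C).congr_deriv (by field_simp; ring)

lemma hasDerivAt_const_mul_log_div_self (C : ℝ) {t : ℝ} (ht : 0 < t) :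
    HasDerivAt (fun s => C * Real.log s / s) (C * (1 - Real.log t) / t ^ 2) t :=
  (((Real.hasDerivAt_log ht.ne').const_mul C).div (hasDerivAt_id t) ht.ne').congr_deriv
    (by simp only [id]; field_simp)

/-- The Type B class (i) connection admits an affine gradient Ricci
soliton: the function `h = (2q(1+p−q)/(1+p)) ln x¹` (if `p ≠ −1`), resp.
`h = q²(ln x¹)²` (if `p = −1`), solves `Hes_h(∂_i,∂_j) + 2ρ^{sym}_{ij} = 0` on `{x¹ > 0}`. -/
theorem stmt11 (P m q : ℝ) (h : Pt2 → ℝ)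
    (hdef : h = if P ≠ -1
      then fun x : Pt2 => (2 * q * (1 + P - q) / (1 + P)) * Real.log (x 0)
      else fun x : Pt2 => q ^ 2 * (Real.log (x 0)) ^ 2) :
    ∀ x : Pt2, 0 < x 0 → ∀ i j : Fin 2,
      hessD (ΓB1 P m q) h i j x + 2 * ricciDSym (ΓB1 P m q) i j x = 0 := by
  subst hdef
  split_ifs with hP
  · have hP1 : 1 + P ≠ 0 := fun h0 => hP (by linarith)
    set C := 2 * q * (1 + P - q) / (1 + P)
    have hC : C * (1 + P) = 2 * q * (1 + P - q) := div_mul_cancel₀ _ hP1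
    refine ΓB1_soliton_of_ode (fun t ht => (Real.hasDerivAt_log ht.ne').const_mul C)
      (fun t ht => (hasDerivAt_inv ht.ne').const_mul C) fun t ht => ?_
    field_simp
    linear_combination -hC
  · obtain rfl : P = -1 := not_not.mp hP
    refine ΓB1_soliton_of_ode (fun t ht => hasDerivAt_const_mul_log_sq (q ^ 2) ht)
      (fun t ht => hasDerivAt_const_mul_log_div_self (2 * q ^ 2) ht) fun t ht => ?_
    field_simp
    ring

end
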